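/- Let ρ and ρ' be quantum states on a Hilbert space H_A and let Π be the orthogonal projection onto the support of ρ'. Then P(ρ,ρ') ≥ P(ρ, ΠρΠ/Tr(Πρ)); that is, among all states supported on the support of ρ', the renormalized projection of ρ is closest to ρ in purified distance. -/

import Mathlib

open Matrix Kronecker ComplexOrder

noncomputable section

variable {n : Type*} [Fintype n] [DecidableEq n]

/-- The PSD square root (old `Matrix.PosSemidef.sqrt`). -/
def posSemidefSqrt {A : Matrix n n ℂ} (hA : A.PosSemidef) : Matrix n n ℂ :=
  hA.1.eigenvectorUnitary.1 * diagonal ((↑) ∘ Real.sqrt ∘ hA.1.eigenvalues) *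
  (star hA.1.eigenvectorUnitary : Matrix n n ℂ)

open Classical in
/-- The square root of a matrix: the PSD square root if the matrix is PSD, else 0. -/
def msqrt (A : Matrix n n ℂ) : Matrix n n ℂ :=
  if h : A.PosSemidef then posSemidefSqrt h else 0

/-- The trace norm (Schatten 1-norm) of a matrix. -/
def trNorm (A : Matrix n n ℂ) : ℝ :=
  ((posSemidefSqrt (Matrix.posSemidef_conjTranspose_mul_self A)).trace).re

/-- The operator norm of a matrix, acting on the Euclidean space. -/
def opNorm (A : Matrix n n ℂ) : ℝ :=
  ‖(Matrix.toEuclideanCLM (𝕜 := ℂ) A : EuclideanSpace ℂ n →L[ℂ] EuclideanSpace ℂ n)‖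

/-- A (normalized) quantum state: positive semidefinite with unit trace. -/
def IsState (ρ : Matrix n n ℂ) : Prop := ρ.PosSemidef ∧ ρ.trace = 1

/-- A subnormalized quantum state: positive semidefinite with trace at most one. -/
def IsSubState (ρ : Matrix n n ℂ) : Prop := ρ.PosSemidef ∧ (ρ.trace).re ≤ 1

/-- Loewner (semidefinite) order: `A ≤ B` iff `B - A` is positive semidefinite. -/
def LoewnerLE (A B : Matrix n n ℂ) : Prop := (B - A).PosSemidef

/-- Fidelity `F(ρ,σ) = ‖√ρ√σ‖₁` (extended to positive operators). -/
def fid (ρ σ : Matrix n n ℂ) : ℝ := trNorm (msqrt ρ * msqrt σ)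

/-- Generalized fidelity for subnormalized states. -/
def gFid (ρ σ : Matrix n n ℂ) : ℝ :=
  fid ρ σ + Real.sqrt ((1 - ρ.trace.re) * (1 - σ.trace.re))

/-- (Generalized) purified distance `P(ρ,σ) = sqrt(1 - F(ρ,σ)²)`. -/
def pDist (ρ σ : Matrix n n ℂ) : ℝ := Real.sqrt (1 - (gFid ρ σ)^2)

/-- Generalized trace distance `δ(ρ,σ) = (‖ρ-σ‖₁ + |Tr(ρ-σ)|)/2` for subnormalized states. -/
def trDist (ρ σ : Matrix n n ℂ) : ℝ :=
  (trNorm (ρ - σ) + |(ρ.trace - σ.trace).re|) / 2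

variable {α β γ : Type*} [Fintype α] [DecidableEq α] [Fintype β] [DecidableEq β]
  [Fintype γ] [DecidableEq γ]

/-- Partial trace over the second tensor factor. -/
def ptrSnd (ρ : Matrix (α × β) (α × β) ℂ) : Matrix α α ℂ :=
  fun i j => ∑ k, ρ (i, k) (j, k)

/-- Partial trace over the first tensor factor. -/
def ptrFst (ρ : Matrix (α × β) (α × β) ℂ) : Matrix β β ℂ :=
  fun i j => ∑ k, ρ (k, i) (k, j)

/-- Partial trace over the middle factor of a tripartite system `(α × β) × γ`. -/
def ptrMid (ρ : Matrix ((α × β) × γ) ((α × β) × γ) ℂ) : Matrix (α × γ) (α × γ) ℂ :=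
  fun p q => ∑ m, ρ ((p.1, m), p.2) ((q.1, m), q.2)

/-- Max-relative entropy `D_max(ρ‖σ) = inf {λ : ρ ≤ 2^λ σ}`. -/
def Dmax (ρ σ : Matrix n n ℂ) : ℝ :=
  sInf {l : ℝ | LoewnerLE ρ (((2:ℝ) ^ l) • σ)}

open Classical in
/-- von Neumann entropy (base 2) of a matrix (0 if not Hermitian). -/
def vnEntropy (ρ : Matrix n n ℂ) : ℝ :=
  if h : ρ.IsHermitian then -∑ i, (h.eigenvalues i) * Real.logb 2 (h.eigenvalues i) else 0

/-!
Put `A = Π ρ Π` and `t = Tr (Π ρ)`. Since `A (1 - Π) = 0`, also `√A Π = √A`, so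
`(√ρ √A)ᴴ (√ρ √A) = √A Π ρ Π √A = A²` and `F(ρ, A / t) = Tr A / √t = √t`. On the other hand
`√ρ' = Π √ρ'`, so Hölder's inequality gives
`F(ρ, ρ') = ‖(√ρ Π) √ρ'‖₁ ≤ ‖√ρ Π‖₂ ‖√ρ'‖₂ = √t`. For states the purified distance decreases
with the fidelity.
-/

section

open scoped MatrixOrder

variable {m : Type*} [Fintype m]

lemma re_trace_conjTranspose_mul_le (X Y : Matrix m m ℂ) :
    (Xᴴ * Y).trace.re ≤ √(Xᴴ * X).trace.re * √(Yᴴ * Y).trace.re := by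
  have hinner (A B : Matrix m m ℂ) :
      (Aᴴ * B).trace = inner ℂ (WithLp.toLp 2 A.vec) (WithLp.toLp 2 B.vec) := by
    rw [EuclideanSpace.inner_eq_star_dotProduct, dotProduct_comm, star_vec_dotProduct_vec]
  simp only [hinner, ← RCLike.re_eq_complex_re, ← norm_eq_sqrt_re_inner]
  exact re_inner_le_norm _ _

lemma mul_eq_self_iff_mul_eq_self {A P : Matrix m m ℂ} (hA : Aᴴ = A) (hP : Pᴴ = P) :
    P * A = A ↔ A * P = A := by
  constructor <;> intro h <;> simpa only [conjTranspose_mul, hA, hP] using congrArg conjTranspose h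

lemma isState_inv_re_trace_smul {A : Matrix m m ℂ} (hA : A.PosSemidef) (h : 0 < A.trace.re) :
    IsState (A.trace.re⁻¹ • A) := by
  refine ⟨hA.smul (inv_nonneg.2 h.le), ?_⟩
  have hre : A.trace = A.trace.re :=
    Complex.eq_re_of_ofReal_le (r := 0) (by simpa using hA.trace_nonneg)
  rw [trace_smul, hre, Complex.real_smul, ← Complex.ofReal_mul, Complex.ofReal_re,
    inv_mul_cancel₀ h.ne', Complex.ofReal_one]

variable [DecidableEq m]

lemma posSemidefSqrt_eq_cfcSqrt {A : Matrix m m ℂ} (hA : A.PosSemidef) :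
    posSemidefSqrt hA = CFC.sqrt A := by
  rw [CFC.sqrt_eq_cfc, cfc_nnreal_eq_real _ A, hA.1.cfc_eq]
  simp only [IsHermitian.cfc, posSemidefSqrt, Unitary.conjStarAlgAut_apply]
  congr 3
  funext i
  simp only [Function.comp_apply, Real.coe_sqrt, Real.coe_toNNReal',
    max_eq_left (hA.eigenvalues_nonneg i)]
  rfl

lemma msqrt_eq_cfcSqrt {A : Matrix m m ℂ} (hA : A.PosSemidef) : msqrt A = CFC.sqrt A :=
  (dif_pos hA).trans (posSemidefSqrt_eq_cfcSqrt hA)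

lemma conjTranspose_cfcSqrt (A : Matrix m m ℂ) : (CFC.sqrt A)ᴴ = CFC.sqrt A :=
  (CFC.sqrt_nonneg A).isSelfAdjoint

lemma cfcSqrt_mul_eq_self {A P : Matrix m m ℂ} (hA : A.PosSemidef) (hP : Pᴴ = P)
    (h : A * P = A) : CFC.sqrt A * P = CFC.sqrt A := by
  set T := CFC.sqrt A
  have hTT : T * T = A := CFC.sqrt_mul_sqrt_self A hA.nonneg
  have hzero : (T * (1 - P))ᴴ * (T * (1 - P)) = 0 := by
    rw [conjTranspose_mul, conjTranspose_sub, conjTranspose_one, hP, conjTranspose_cfcSqrt]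
    calc (1 - P) * T * (T * (1 - P)) = (1 - P) * (A * (1 - P)) := by
          rw [← hTT]; simp only [Matrix.mul_assoc]
      _ = 0 := by rw [Matrix.mul_sub, Matrix.mul_one, h, sub_self, Matrix.mul_zero]
  have := conjTranspose_mul_self_eq_zero.mp hzero
  rwa [Matrix.mul_sub, Matrix.mul_one, sub_eq_zero, eq_comm] at this

lemma mul_eq_self_of_range_le {A P : Matrix m m ℂ} (hPP : P * P = P)
    (h : LinearMap.range A.mulVecLin ≤ LinearMap.range P.mulVecLin) : P * A = A := by
  refine Matrix.toLin'.injective (LinearMap.ext fun v => ?_)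
  obtain ⟨w, hw⟩ := h (LinearMap.mem_range_self _ v)
  rw [toLin'_apply', toLin'_apply', mulVecLin_mul, LinearMap.comp_apply, ← hw,
    ← LinearMap.comp_apply, ← mulVecLin_mul, hPP]

lemma trNorm_eq_re_trace_cfcSqrt (X : Matrix m m ℂ) :
    trNorm X = (CFC.sqrt (Xᴴ * X)).trace.re := by
  rw [trNorm, posSemidefSqrt_eq_cfcSqrt]

lemma trNorm_nonneg (X : Matrix m m ℂ) : 0 ≤ trNorm X := by
  rw [trNorm_eq_re_trace_cfcSqrt]
  exact (Complex.nonneg_iff.mp (nonneg_iff_posSemidef.mp (CFC.sqrt_nonneg _)).trace_nonneg).1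

lemma trNorm_eq_re_trace_of_conjTranspose_mul_self_eq {X S : Matrix m m ℂ}
    (hS : S.PosSemidef) (h : Xᴴ * X = S * S) : trNorm X = S.trace.re := by
  rw [trNorm_eq_re_trace_cfcSqrt, h, CFC.sqrt_mul_self S hS.nonneg]

lemma re_trace_conjTranspose_mul_mul_le_of_idempotent {Q : Matrix m m ℂ}
    (hQ : Qᴴ = Q) (hQQ : Q * Q = Q) (C : Matrix m m ℂ) :
    (Cᴴ * Q * C).trace.re ≤ (Cᴴ * C).trace.re := by
  have hgap : Cᴴ * C - Cᴴ * Q * C = ((1 - Q) * C)ᴴ * ((1 - Q) * C) := by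
    have : (1 - Q)ᴴ * (1 - Q) = 1 - Q := by
      rw [conjTranspose_sub, conjTranspose_one, hQ, sub_mul, mul_sub, mul_sub, hQQ]
      simp
    rw [conjTranspose_mul, Matrix.mul_assoc Cᴴ (1 - Q)ᴴ, ← Matrix.mul_assoc (1 - Q)ᴴ, this]
    simp [sub_mul, mul_sub, Matrix.mul_assoc]
  have := Complex.nonneg_iff.mp (posSemidef_conjTranspose_mul_self ((1 - Q) * C)).trace_nonneg
  rw [← hgap, trace_sub, Complex.sub_re] at this
  linarith [this.1]

/-- The Moore–Penrose pseudo-inverse of a Hermitian matrix (via `0⁻¹ = 0` on the kernel). -/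
def hermitianPinv (S : Matrix m m ℂ) : Matrix m m ℂ := cfc (fun x : ℝ => x⁻¹) S

lemma conjTranspose_hermitianPinv (S : Matrix m m ℂ) : (hermitianPinv S)ᴴ = hermitianPinv S :=
  (cfc_predicate (fun x : ℝ => x⁻¹) S).star_eq

lemma hermitianPinv_mul_mul_self {S : Matrix m m ℂ} (hS : IsSelfAdjoint S) :
    hermitianPinv S * (S * S) = S := by
  have hc (f : ℝ → ℝ) : ContinuousOn f (spectrum ℝ S) := S.finite_real_spectrum.continuousOn f
  have h : cfc (fun x : ℝ => x⁻¹ * (x * x)) S = cfc (fun x => x) S :=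
    cfc_congr fun x _ => by rcases eq_or_ne x 0 with rfl | hx <;> field_simp
  rwa [cfc_mul _ _ S (hc _) (hc _), cfc_mul _ _ S (hc _) (hc _), cfc_id' ℝ S] at h

lemma hermitianPinv_sq_mul_sq_mul_hermitianPinv_sq {S : Matrix m m ℂ} (hS : IsSelfAdjoint S) :
    hermitianPinv S * hermitianPinv S * (S * S) * (hermitianPinv S * hermitianPinv S) =
      hermitianPinv S * hermitianPinv S := by
  have hc (f : ℝ → ℝ) : ContinuousOn f (spectrum ℝ S) := S.finite_real_spectrum.continuousOn f
  have h : cfc (fun x : ℝ => x⁻¹ * x⁻¹ * (x * x) * (x⁻¹ * x⁻¹)) S =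
      cfc (fun x => x⁻¹ * x⁻¹) S :=
    cfc_congr fun x _ => by rcases eq_or_ne x 0 with rfl | hx <;> field_simp
  simp only [cfc_mul _ _ S (hc _) (hc _), cfc_id' ℝ S] at h
  exact h

/-- Writing `|X| = R Xᴴ X` with `R` the pseudo-inverse of `|X|`, the trace norm of `X = C B` is the
Hilbert–Schmidt pairing of `Cᴴ X R` with `B`, and `X R² Xᴴ` is an orthogonal projection. -/
lemma trNorm_mul_le (C B : Matrix m m ℂ) :
    trNorm (C * B) ≤ √(Cᴴ * C).trace.re * √(Bᴴ * B).trace.re := by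
  set X := C * B with hX
  set S := CFC.sqrt (Xᴴ * X)
  have hS : IsSelfAdjoint S := (CFC.sqrt_nonneg _).isSelfAdjoint
  have hSS : S * S = Xᴴ * X :=
    CFC.sqrt_mul_sqrt_self _ (posSemidef_conjTranspose_mul_self X).nonneg
  set R := hermitianPinv S
  have hR : Rᴴ = R := conjTranspose_hermitianPinv S
  set Y := Cᴴ * X * R
  set Q := X * (R * R) * Xᴴ
  have hQ : Qᴴ = Q := by
    simp only [Q, conjTranspose_mul, conjTranspose_conjTranspose, hR, Matrix.mul_assoc]
  have hQQ : Q * Q = Q := by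
    have := hermitianPinv_sq_mul_sq_mul_hermitianPinv_sq hS
    rw [hSS] at this
    calc Q * Q = X * (R * R * (Xᴴ * X) * (R * R)) * Xᴴ := by simp only [Q, Matrix.mul_assoc]
      _ = Q := by rw [this]
  have htr : trNorm X = (Yᴴ * B).trace.re := by
    rw [trNorm_eq_re_trace_cfcSqrt]
    change S.trace.re = _
    rw [← hermitianPinv_mul_mul_self hS, hSS]
    simp only [Y, conjTranspose_mul, conjTranspose_conjTranspose, hR, hX, Matrix.mul_assoc]
    rfl
  have hYY : (Yᴴ * Y).trace = (Cᴴ * Q * C).trace := by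
    rw [← trace_mul_comm]
    simp only [Y, Q, conjTranspose_mul, conjTranspose_conjTranspose, hR, Matrix.mul_assoc]
  calc trNorm X = (Yᴴ * B).trace.re := htr
    _ ≤ √(Yᴴ * Y).trace.re * √(Bᴴ * B).trace.re := re_trace_conjTranspose_mul_le Y B
    _ ≤ √(Cᴴ * C).trace.re * √(Bᴴ * B).trace.re := by
      rw [hYY]
      gcongr ?_ * _
      exact Real.sqrt_le_sqrt (re_trace_conjTranspose_mul_mul_le_of_idempotent hQ hQQ C)

lemma fid_le_sqrt_re_trace_mul {ρ σ P : Matrix m m ℂ} (hρ : ρ.PosSemidef) (hσ : IsState σ)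
    (hP : Pᴴ = P) (hPP : P * P = P) (hPσ : P * σ = σ) : fid ρ σ ≤ √(P * ρ).trace.re := by
  have hPT : P * CFC.sqrt σ = CFC.sqrt σ :=
    (mul_eq_self_iff_mul_eq_self (conjTranspose_cfcSqrt σ) hP).mpr
      (cfcSqrt_mul_eq_self hσ.1 hP ((mul_eq_self_iff_mul_eq_self hσ.1.1 hP).mp hPσ))
  have hρP : (CFC.sqrt ρ * P)ᴴ * (CFC.sqrt ρ * P) = P * ρ * P := by
    rw [conjTranspose_mul, hP, conjTranspose_cfcSqrt, Matrix.mul_assoc,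
      ← Matrix.mul_assoc (CFC.sqrt ρ), CFC.sqrt_mul_sqrt_self ρ hρ.nonneg, Matrix.mul_assoc]
  have hσσ : (CFC.sqrt σ)ᴴ * CFC.sqrt σ = σ := by
    rw [conjTranspose_cfcSqrt, CFC.sqrt_mul_sqrt_self σ hσ.1.nonneg]
  rw [fid, msqrt_eq_cfcSqrt hρ, msqrt_eq_cfcSqrt hσ.1, ← hPT, ← Matrix.mul_assoc]
  refine (trNorm_mul_le _ _).trans (le_of_eq ?_)
  rw [hρP, hσσ, trace_mul_cycle, hPP, hσ.2, Complex.one_re, Real.sqrt_one, mul_one]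

lemma fid_eq_sqrt_of_compress {ρ σ P : Matrix m m ℂ} {t : ℝ} (hρ : ρ.PosSemidef)
    (hσ : IsState σ) (hP : Pᴴ = P) (hσP : σ * P = σ) (ht : 0 ≤ t) (h : P * ρ * P = t • σ) :
    fid ρ σ = √t := by
  set T := CFC.sqrt σ
  have hTT : T * T = σ := CFC.sqrt_mul_sqrt_self σ hσ.1.nonneg
  have hTP : T * P = T := cfcSqrt_mul_eq_self hσ.1 hP hσP
  have hPT : P * T = T := (mul_eq_self_iff_mul_eq_self (conjTranspose_cfcSqrt σ) hP).mpr hTP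
  have hX : (CFC.sqrt ρ * T)ᴴ * (CFC.sqrt ρ * T) = (√t • σ) * (√t • σ) :=
    calc (CFC.sqrt ρ * T)ᴴ * (CFC.sqrt ρ * T) = T * P * ρ * (P * T) := by
          rw [conjTranspose_mul, conjTranspose_cfcSqrt, conjTranspose_cfcSqrt, hTP, hPT,
            Matrix.mul_assoc T, ← Matrix.mul_assoc (CFC.sqrt ρ),
            CFC.sqrt_mul_sqrt_self ρ hρ.nonneg, Matrix.mul_assoc]
      _ = T * (t • σ) * T := by rw [← h]; simp only [Matrix.mul_assoc]
      _ = t • (σ * σ) := by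
          rw [Matrix.mul_smul, Matrix.smul_mul, ← hTT]; simp only [Matrix.mul_assoc]
      _ = (√t • σ) * (√t • σ) := by rw [smul_mul_smul, Real.mul_self_sqrt ht]
  rw [fid, msqrt_eq_cfcSqrt hρ, msqrt_eq_cfcSqrt hσ.1,
    trNorm_eq_re_trace_of_conjTranspose_mul_self_eq (hσ.1.smul (Real.sqrt_nonneg t)) hX,
    trace_smul, hσ.2]
  simp

lemma gFid_eq_fid {ρ σ : Matrix m m ℂ} (hρ : IsState ρ) (hσ : IsState σ) :
    gFid ρ σ = fid ρ σ := by
  simp [gFid, hρ.2, hσ.2]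

lemma pDist_le_pDist_of_fid_le {ρ σ τ : Matrix m m ℂ} (hρ : IsState ρ) (hσ : IsState σ)
    (hτ : IsState τ) (h : fid ρ σ ≤ fid ρ τ) : pDist ρ τ ≤ pDist ρ σ := by
  rw [pDist, pDist, gFid_eq_fid hρ hσ, gFid_eq_fid hρ hτ]
  exact Real.sqrt_le_sqrt (sub_le_sub_left (pow_le_pow_left₀ (trNorm_nonneg _) h 2) 1)

end

/-- Let ρ, ρ' be states and Π the orthogonal projection onto the support
of ρ'. Then `P(ρ,ρ') ≥ P(ρ, ΠρΠ/Tr(Πρ))`. -/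
theorem pDist_ge_pDist_projected {d : ℕ}
    (ρ ρ' Pj : Matrix (Fin d) (Fin d) ℂ) (hρ : IsState ρ) (hρ' : IsState ρ')
    (hproj : Pj * Pj = Pj) (hherm : Pjᴴ = Pj)
    (hrange : LinearMap.range Pj.mulVecLin = LinearMap.range ρ'.mulVecLin)
    (hpos : 0 < ((Pj * ρ).trace).re) :
    pDist ρ ρ' ≥ pDist ρ ((((Pj * ρ).trace).re)⁻¹ • (Pj * ρ * Pj)) := by
  have hA : (Pj * ρ * Pj).PosSemidef := by
    simpa only [hherm] using hρ.1.mul_mul_conjTranspose_same Pj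
  have htr : (Pj * ρ * Pj).trace = (Pj * ρ).trace := by rw [trace_mul_cycle, hproj]
  rw [← htr] at hpos ⊢
  set t := (Pj * ρ * Pj).trace.re
  have hσ := isState_inv_re_trace_smul hA hpos
  have hσP : (t⁻¹ • (Pj * ρ * Pj)) * Pj = t⁻¹ • (Pj * ρ * Pj) := by
    rw [smul_mul_assoc, Matrix.mul_assoc, hproj]
  have hcompress : Pj * ρ * Pj = t • t⁻¹ • (Pj * ρ * Pj) := by
    rw [smul_smul, mul_inv_cancel₀ hpos.ne', one_smul]
  refine pDist_le_pDist_of_fid_le hρ hρ' hσ ?_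
  calc fid ρ ρ' ≤ √(Pj * ρ).trace.re :=
        fid_le_sqrt_re_trace_mul hρ.1 hρ' hherm hproj (mul_eq_self_of_range_le hproj hrange.ge)
    _ = √t := by rw [← htr]
    _ = fid ρ (t⁻¹ • (Pj * ρ * Pj)) :=
        (fid_eq_sqrt_of_compress hρ.1 hσ hherm hσP hpos.le hcompress).symm
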